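/- Assume b_EI > 0. Then for every fixed real N_I, the function N_E ↦ I2(N_E, N_I) is strictly decreasing and convex on ℝ, and I2(N_E, N_I) → 0 as N_E → ∞. -/

import Mathlib

open MeasureTheory

open Real Filter Set


lemma gauss_lin_integrable (c : ℝ) : Integrable (fun s : ℝ => Real.exp (-s^2/2 + c*s)) := by
  have h : ∀ s : ℝ, Real.exp (-s^2/2 + c*s) = Real.exp (c^2/2) * Real.exp (-(1/2) * (s - c)^2) := by
    intro s; rw [← Real.exp_add]; ring_nf
  simp_rw [h]
  exact ((integrable_exp_neg_mul_sq (by norm_num : (0:ℝ) < 1/2)).comp_sub_right c).const_mul _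

lemma aux_integrable {c d : ℝ} (h : d < c) :
    IntegrableOn (fun s => Real.exp (-s^2/2) / s * (Real.exp (s*c) - Real.exp (s*d)))
      (Set.Ioi (0:ℝ)) := by
  have hcont : ContinuousOn (fun s => Real.exp (-s^2/2) / s * (Real.exp (s*c) - Real.exp (s*d)))
      (Set.Ioi (0:ℝ)) := by
    apply ContinuousOn.mul
    · exact (Continuous.continuousOn (by continuity)).div continuousOn_id
        (fun s hs => ne_of_gt hs)
    · exact Continuous.continuousOn (by continuity)
  refine Integrable.mono' (g := fun s => (c - d) * Real.exp (-s^2/2 + c*s))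
    ((gauss_lin_integrable c).const_mul (c-d)).integrableOn
    (hcont.aestronglyMeasurable measurableSet_Ioi) ?_
  rw [ae_restrict_iff' measurableSet_Ioi]
  refine Filter.Eventually.of_forall (fun s hs => ?_)
  have hs0 : (0:ℝ) < s := hs
  have hd_le : Real.exp (s*d) ≤ Real.exp (s*c) := Real.exp_le_exp.2 (by nlinarith)
  have key : Real.exp (s*c) - Real.exp (s*d) ≤ s*(c-d) * Real.exp (s*c) := by
    have h1 : 1 - s*(c-d) ≤ Real.exp (-(s*(c-d))) := by
      have := Real.add_one_le_exp (-(s*(c-d))); linarith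
    have h2 : Real.exp (s*c) * (1 - s*(c-d)) ≤ Real.exp (s*c) * Real.exp (-(s*(c-d))) :=
      mul_le_mul_of_nonneg_left h1 (Real.exp_pos _).le
    rw [← Real.exp_add] at h2
    have : s*c + -(s*(c-d)) = s*d := by ring
    rw [this] at h2; nlinarith
  have hnn : 0 ≤ Real.exp (-s^2/2) / s * (Real.exp (s*c) - Real.exp (s*d)) := by
    apply mul_nonneg (by positivity); linarith
  rw [Real.norm_eq_abs, abs_of_nonneg hnn]
  have : Real.exp (-s^2/2) / s * (Real.exp (s*c) - Real.exp (s*d))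
      ≤ Real.exp (-s^2/2) / s * (s*(c-d) * Real.exp (s*c)) := by
    apply mul_le_mul_of_nonneg_left key (by positivity)
  calc Real.exp (-s^2/2) / s * (Real.exp (s*c) - Real.exp (s*d))
      ≤ Real.exp (-s^2/2) / s * (s*(c-d) * Real.exp (s*c)) := this
    _ = (c - d) * (Real.exp (-s^2/2) * Real.exp (s*c)) := by field_simp
    _ = (c - d) * Real.exp (-s^2/2 + c*s) := by rw [← Real.exp_add]; ring_nf

/-- The stationary firing-rate functional `I2` of the inhibitory population. -/
noncomputable def I2 (VR VF aI bEE bEI bII νext : ℝ) (NE NI : ℝ) : ℝ :=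
  ∫ s in Set.Ioi (0:ℝ),
    Real.exp (-s ^ 2 / 2) / s *
      (Real.exp (s * ((VF - (bEI * NE - bII * NI + (bEI - bEE) * νext)) / Real.sqrt aI)) -
       Real.exp (s * ((VR - (bEI * NE - bII * NI + (bEI - bEE) * νext)) / Real.sqrt aI)))

/-- For `b_EI > 0` and each fixed `N_I`, the map `N_E ↦ I2(N_E, N_I)` is strictly
decreasing, convex on `ℝ`, and tends to `0` as `N_E → ∞`. -/
theorem I2_strictAnti_convex_tendsto_zero (VR VF aI bEE bEI bII νext : ℝ)
    (hV : VR < VF) (haI : 0 < aI)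
    (hEE : 0 ≤ bEE) (hEI : 0 < bEI) (hII : 0 ≤ bII) (hν : 0 ≤ νext) (NI : ℝ) :
    StrictAnti (fun x => I2 VR VF aI bEE bEI bII νext x NI) ∧
    ConvexOn ℝ Set.univ (fun x => I2 VR VF aI bEE bEI bII νext x NI) ∧
    Filter.Tendsto (fun x => I2 VR VF aI bEE bEI bII νext x NI)
      Filter.atTop (nhds 0) := by
  have hr : 0 < Real.sqrt aI := Real.sqrt_pos.2 haI
  set r := Real.sqrt aI with hr_def
  set c := bEI / r with hc_def
  have hc : 0 < c := div_pos hEI hr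
  set AF := (VF + bII * NI - (bEI - bEE) * νext) / r with hAF_def
  set AR := (VR + bII * NI - (bEI - bEE) * νext) / r with hAR_def
  have hAB : AR < AF := by
    rw [hAF_def, hAR_def]; gcongr
  set g : ℝ → ℝ := fun s => Real.exp (-s^2/2) / s * (Real.exp (s*AF) - Real.exp (s*AR))
    with hg_def
  have hg_pos : ∀ s ∈ Set.Ioi (0:ℝ), 0 < g s := by
    intro s hs
    have hs0 : (0:ℝ) < s := hs
    apply mul_pos (by positivity)
    have : Real.exp (s*AR) < Real.exp (s*AF) := Real.exp_lt_exp.2 (by nlinarith)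
    linarith
  -- the key rewriting of I2
  have hI : ∀ x : ℝ, I2 VR VF aI bEE bEI bII νext x NI
      = ∫ s in Set.Ioi (0:ℝ), Real.exp (-(c*s*x)) * g s := by
    intro x
    rw [I2]
    apply setIntegral_congr_fun measurableSet_Ioi
    intro s _
    have e1 : s * ((VF - (bEI * x - bII * NI + (bEI - bEE) * νext)) / r)
        = s*AF + -(c*s*x) := by
      rw [hAF_def, hc_def]; field_simp; ring
    have e2 : s * ((VR - (bEI * x - bII * NI + (bEI - bEE) * νext)) / r)
        = s*AR + -(c*s*x) := by
      rw [hAR_def, hc_def]; field_simp; ring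
    simp only [← hr_def, e1, e2, Real.exp_add, hg_def]
    ring_nf
  -- integrability for every x
  have hint : ∀ x : ℝ, IntegrableOn (fun s => Real.exp (-(c*s*x)) * g s) (Set.Ioi (0:ℝ)) := by
    intro x
    have h' : AR - c*x < AF - c*x := by linarith
    apply (aux_integrable h').congr_fun _ measurableSet_Ioi
    intro s _
    simp only [hg_def]
    rw [show s*(AF - c*x) = s*AF + -(c*s*x) by ring, show s*(AR - c*x) = s*AR + -(c*s*x) by ring,
      Real.exp_add, Real.exp_add]
    ring
  have hgint : IntegrableOn g (Set.Ioi (0:ℝ)) := aux_integrable hAB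
  refine ⟨?_, ?_, ?_⟩
  · -- StrictAnti
    intro x y hxy
    simp only [hI]
    have hdiff : IntegrableOn (fun s => (Real.exp (-(c*s*x)) - Real.exp (-(c*s*y))) * g s)
        (Set.Ioi (0:ℝ)) := by
      refine ((hint x).sub (hint y)).congr (Filter.Eventually.of_forall fun s => ?_)
      simp only [Pi.sub_apply]; ring
    have hpos : 0 < ∫ s in Set.Ioi (0:ℝ), (Real.exp (-(c*s*x)) - Real.exp (-(c*s*y))) * g s := by
      rw [integral_pos_iff_support_of_nonneg_ae _ hdiff]
      · have hsub : Set.Ioi (0:ℝ) ⊆ Function.support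
            (fun s => (Real.exp (-(c*s*x)) - Real.exp (-(c*s*y))) * g s) := by
          intro s hs
          have hs0 : (0:ℝ) < s := hs
          have h1 : Real.exp (-(c*s*y)) < Real.exp (-(c*s*x)) :=
            Real.exp_lt_exp.2 (by
              have := mul_lt_mul_of_pos_left hxy (mul_pos hc hs0); linarith)
          exact ne_of_gt (mul_pos (by linarith) (hg_pos s hs))
        have h2 : (volume.restrict (Set.Ioi (0:ℝ))) (Set.Ioi (0:ℝ)) = ⊤ := by
          rw [Measure.restrict_apply measurableSet_Ioi]
          simp [Real.volume_Ioi]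
        calc (0:ENNReal) < ⊤ := by simp
          _ = (volume.restrict (Set.Ioi (0:ℝ))) (Set.Ioi (0:ℝ)) := h2.symm
          _ ≤ _ := measure_mono hsub
      · filter_upwards [ae_restrict_mem measurableSet_Ioi] with s hs
        have hs0 : (0:ℝ) < s := hs
        have h1 : Real.exp (-(c*s*y)) ≤ Real.exp (-(c*s*x)) :=
          Real.exp_le_exp.2 (by
            have := mul_le_mul_of_nonneg_left hxy.le (mul_pos hc hs0).le; linarith)
        exact mul_nonneg (by linarith) (hg_pos s hs).le
    have heq : ∫ s in Set.Ioi (0:ℝ), (Real.exp (-(c*s*x)) - Real.exp (-(c*s*y))) * g s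
        = (∫ s in Set.Ioi (0:ℝ), Real.exp (-(c*s*x)) * g s)
          - ∫ s in Set.Ioi (0:ℝ), Real.exp (-(c*s*y)) * g s := by
      rw [← integral_sub (hint x) (hint y)]
      apply setIntegral_congr_fun measurableSet_Ioi
      intro s _; ring
    rw [heq] at hpos; linarith
  · -- ConvexOn
    refine ⟨convex_univ, fun x _ y _ a b ha hb hab => ?_⟩
    simp only [hI, smul_eq_mul]
    have hpt : ∀ s ∈ Set.Ioi (0:ℝ),
        Real.exp (-(c*s*(a*x + b*y))) * g s
          ≤ (a * Real.exp (-(c*s*x)) + b * Real.exp (-(c*s*y))) * g s := by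
      intro s hs
      apply mul_le_mul_of_nonneg_right _ (hg_pos s hs).le
      have := convexOn_exp.2 (Set.mem_univ (-(c*s*x))) (Set.mem_univ (-(c*s*y))) ha hb hab
      simp only [smul_eq_mul] at this
      calc Real.exp (-(c*s*(a*x+b*y))) = Real.exp (a * -(c*s*x) + b * -(c*s*y)) := by ring_nf
        _ ≤ a * Real.exp (-(c*s*x)) + b * Real.exp (-(c*s*y)) := this
    have hia := (hint x).const_mul a
    have hib := (hint y).const_mul b
    calc (∫ s in Set.Ioi (0:ℝ), Real.exp (-(c*s*(a*x + b*y))) * g s)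
        ≤ ∫ s in Set.Ioi (0:ℝ),
            (a * Real.exp (-(c*s*x)) + b * Real.exp (-(c*s*y))) * g s := by
          apply setIntegral_mono_on (hint _) _ measurableSet_Ioi hpt
          refine (hia.add hib).congr (Filter.Eventually.of_forall fun s => ?_)
          simp only [Pi.add_apply]; ring
      _ = a * (∫ s in Set.Ioi (0:ℝ), Real.exp (-(c*s*x)) * g s)
          + b * ∫ s in Set.Ioi (0:ℝ), Real.exp (-(c*s*y)) * g s := by
          rw [← integral_const_mul, ← integral_const_mul, ← integral_add hia hib]
          apply setIntegral_congr_fun measurableSet_Ioi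
          intro s _; ring
  · -- Tendsto
    simp only [hI]
    have key : Filter.Tendsto (fun x => ∫ s in Set.Ioi (0:ℝ), Real.exp (-(c*s*x)) * g s)
        Filter.atTop (nhds (∫ s in Set.Ioi (0:ℝ), (0:ℝ))) := by
     apply tendsto_integral_filter_of_dominated_convergence g
     · exact Filter.Eventually.of_forall (fun x => (hint x).aestronglyMeasurable)
     · filter_upwards [Filter.eventually_ge_atTop (0:ℝ)] with x hx
       rw [ae_restrict_iff' measurableSet_Ioi]
       refine Filter.Eventually.of_forall (fun s hs => ?_)
       have hs0 : (0:ℝ) < s := hs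
       have h1 : Real.exp (-(c*s*x)) ≤ 1 := Real.exp_le_one_iff.2 (by
         have := mul_nonneg (mul_nonneg hc.le hs0.le) hx; linarith)
       rw [Real.norm_eq_abs, abs_of_nonneg (mul_nonneg (Real.exp_pos _).le (hg_pos s hs).le)]
       nlinarith [hg_pos s hs, Real.exp_pos (-(c*s*x))]
     · exact hgint
     · rw [ae_restrict_iff' measurableSet_Ioi]
       refine Filter.Eventually.of_forall (fun s hs => ?_)
       have hs0 : (0:ℝ) < s := hs
       have hcs : 0 < c*s := mul_pos hc hs0
       have hbot : Filter.Tendsto (fun x : ℝ => -(c*s*x)) Filter.atTop Filter.atBot := by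
         have h1 : Filter.Tendsto (fun x : ℝ => c*s*x) Filter.atTop Filter.atTop :=
           Filter.Tendsto.const_mul_atTop hcs Filter.tendsto_id
         exact Filter.tendsto_neg_atBot_iff.mpr h1
       have := (Real.tendsto_exp_atBot.comp hbot).mul_const (g s)
       simpa using this
    simpa using key
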